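/- Let G be an edge-coloured graph on n vertices with at least n colour classes, each of size at least 2n/5. Then G contains a rainbow triangle. -/

import Mathlib

/-!
Count ordered triangles: `T` of them in `G` and `Tᵢ` inside colour class `i`, which has `kᵢ`
edges and degrees `dᵢ`; let `e` be the number of edges.

For every edge `uv`, `d u + d v ≤ n + |N u ∩ N v|`; summing over ordered edges gives
`2 ∑ d² ≤ 2en + T`, and with Cauchy–Schwarz `8e² ≤ n (2en + T)`. Inside class `i` the same sum, now
with `dᵢ u + dᵢ v ≤ min (kᵢ + 1) n + |Nᵢ u ∩ Nᵢ v|`, gives `2 ∑ dᵢ² ≤ 2 kᵢ min (kᵢ + 1) n + Tᵢ`.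

If no triangle is rainbow, each has two equally coloured edges at some corner, and a monochromatic
one at all three corners. Hence `T + 2 ∑ Tᵢ` is at most three times the number of equally coloured
paths `xyz` with `x ≠ z`, which is `∑ᵢ (∑ dᵢ² - 2kᵢ)`; so `T + 6e ≤ 3 ∑ kᵢ min (kᵢ + 1) n`.
When `kᵢ ≥ 2n/5`, each summand is at most `((7n + 5) kᵢ - 2n²) / 5`.

With `m ≥ n` colours, eliminating `T` leaves `40e² - 31n²e + 6n⁴ + 15ne ≤ 0`, which is impossible
because `(5e - 2n²)(8e - 3n²) ≥ 0` once `e ≥ 2n²/5`.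
-/

open Finset

namespace SimpleGraph

variable {V ι : Type*}

def edgeColorClass (G : SimpleGraph V) (col : Sym2 V → ι) (i : ι) : SimpleGraph V where
  Adj u v := G.Adj u v ∧ col s(u, v) = i
  symm := ⟨fun _ _ h => ⟨h.1.symm, Sym2.eq_swap ▸ h.2⟩⟩
  loopless := ⟨fun _ h => G.irrefl h.1⟩

@[simp]
theorem edgeColorClass_adj {G : SimpleGraph V} {col : Sym2 V → ι} {i : ι} {u v : V} :
    (G.edgeColorClass col i).Adj u v ↔ G.Adj u v ∧ col s(u, v) = i := Iff.rfl

instance (G : SimpleGraph V) [DecidableRel G.Adj] [DecidableEq ι] (col : Sym2 V → ι) (i : ι) :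
    DecidableRel (G.edgeColorClass col i).Adj :=
  fun _ _ => instDecidableAnd

variable [Fintype V] (G : SimpleGraph V) [DecidableRel G.Adj]

theorem sum_sum_neighborFinset_comm (f : V → V → ℕ) :
    ∑ x, ∑ z ∈ G.neighborFinset x, f x z = ∑ z, ∑ x ∈ G.neighborFinset z, f x z := by
  simp only [neighborFinset_eq_filter, sum_filter]
  rw [sum_comm]
  simp only [adj_comm]

theorem sum_sum_neighborFinset_degree_add_degree :
    ∑ x, ∑ z ∈ G.neighborFinset x, (G.degree x + G.degree z) = 2 * ∑ v, G.degree v ^ 2 := by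
  rw [two_mul]
  simp only [sum_add_distrib, sum_const, card_neighborFinset_eq_degree, smul_eq_mul, ← sq]
  rw [G.sum_sum_neighborFinset_comm fun _ z => G.degree z]
  simp only [sum_const, card_neighborFinset_eq_degree, smul_eq_mul, ← sq]

theorem four_mul_sq_card_edgeFinset_le :
    4 * #G.edgeFinset ^ 2 ≤ Fintype.card V * ∑ v, G.degree v ^ 2 := by
  have := sq_sum_le_card_mul_sum_sq (s := univ) (f := fun v => G.degree v)
  rw [sum_degrees_eq_twice_card_edges, card_univ] at this
  linarith

def orderedTriangles : Finset (V × V × V) :=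
  {t | G.Adj t.1 t.2.1 ∧ G.Adj t.2.1 t.2.2 ∧ G.Adj t.1 t.2.2}

theorem sum_orderedTriangles_rotate (f : V × V × V → ℕ) :
    ∑ t ∈ G.orderedTriangles, f (t.2.1, t.2.2, t.1) = ∑ t ∈ G.orderedTriangles, f t := by
  refine sum_nbij' (fun t => (t.2.1, t.2.2, t.1)) (fun t => (t.2.2, t.1, t.2.1)) ?_ ?_ ?_ ?_ ?_ <;>
    simp +contextual [orderedTriangles, adj_comm]

section

variable [DecidableEq V]

theorem degree_add_degree_le_card_add_card_inter (u v : V) :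
    G.degree u + G.degree v ≤ Fintype.card V + #(G.neighborFinset u ∩ G.neighborFinset v) := by
  rw [← card_neighborFinset_eq_degree, ← card_neighborFinset_eq_degree,
    ← card_union_add_card_inter]
  exact Nat.add_le_add_right (card_le_univ _) _

theorem Adj.degree_add_degree_le {G : SimpleGraph V} [DecidableRel G.Adj] {u v : V}
    (h : G.Adj u v) : G.degree u + G.degree v ≤ #G.edgeFinset + 1 := by
  have hinter : G.incidenceFinset u ∩ G.incidenceFinset v = {s(u, v)} := by
    rw [← coe_inj, coe_inter, coe_incidenceFinset, coe_incidenceFinset, coe_singleton,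
      G.incidenceSet_inter_incidenceSet_of_adj h]
  rw [← card_incidenceFinset_eq_degree, ← card_incidenceFinset_eq_degree,
    ← card_union_add_card_inter, hinter, card_singleton]
  refine Nat.add_le_add_right (card_le_card fun e he => ?_) _
  rw [mem_union, mem_incidenceFinset, mem_incidenceFinset] at he
  rw [mem_edgeFinset]
  exact he.elim (·.1) (·.1)

theorem card_orderedTriangles : #G.orderedTriangles =
    ∑ x, ∑ z ∈ G.neighborFinset x, #(G.neighborFinset x ∩ G.neighborFinset z) := by
  simp only [orderedTriangles, card_filter, Fintype.sum_prod_type]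
  refine sum_congr rfl fun x _ => ?_
  have h : ∀ y z, (G.Adj x y ∧ G.Adj y z ∧ G.Adj x z) ↔
      (G.Adj x z ∧ y ∈ G.neighborFinset x ∩ G.neighborFinset z) := by
    simp [adj_comm]; tauto
  simp_rw [h, ite_and]
  rw [sum_comm]
  simp [neighborFinset_eq_filter, sum_filter, filter_and]

theorem two_mul_sum_degree_sq_le {c : ℕ} (hc : ∀ u v, G.Adj u v →
      G.degree u + G.degree v ≤ c + #(G.neighborFinset u ∩ G.neighborFinset v)) :
    2 * ∑ v, G.degree v ^ 2 ≤ 2 * #G.edgeFinset * c + #G.orderedTriangles := by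
  rw [← sum_sum_neighborFinset_degree_add_degree, card_orderedTriangles,
    ← sum_degrees_eq_twice_card_edges, sum_mul, ← sum_add_distrib]
  refine sum_le_sum fun x _ => ?_
  calc ∑ z ∈ G.neighborFinset x, (G.degree x + G.degree z)
      ≤ ∑ z ∈ G.neighborFinset x, (c + #(G.neighborFinset x ∩ G.neighborFinset z)) :=
        sum_le_sum fun z hz => hc x z ((mem_neighborFinset ..).1 hz)
    _ = _ := by rw [sum_add_distrib, sum_const, card_neighborFinset_eq_degree, smul_eq_mul]

theorem two_mul_sum_degree_sq_le_min : 2 * ∑ v, G.degree v ^ 2 ≤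
    2 * #G.edgeFinset * min (#G.edgeFinset + 1) (Fintype.card V) + #G.orderedTriangles := by
  refine G.two_mul_sum_degree_sq_le fun u v huv => ?_
  rcases min_choice (#G.edgeFinset + 1) (Fintype.card V) with h | h <;> rw [h]
  · exact huv.degree_add_degree_le.trans (Nat.le_add_right _ _)
  · exact G.degree_add_degree_le_card_add_card_inter u v

def orderedCherries : Finset (V × V × V) :=
  {t | G.Adj t.1 t.2.1 ∧ G.Adj t.2.1 t.2.2 ∧ t.1 ≠ t.2.2}

theorem card_orderedCherries_add_two_mul_card_edgeFinset :
    #G.orderedCherries + 2 * #G.edgeFinset = ∑ v, G.degree v ^ 2 := by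
  simp only [← sum_degrees_eq_twice_card_edges, orderedCherries, card_filter,
    Fintype.sum_prod_type]
  rw [sum_comm, ← sum_add_distrib]
  refine sum_congr rfl fun y _ => ?_
  have h : ∀ x z, (G.Adj x y ∧ G.Adj y z ∧ x ≠ z) ↔
      (x ∈ G.neighborFinset y ∧ z ∈ (G.neighborFinset y).erase x) := by
    simp [adj_comm]; tauto
  have hx : ∀ x, ∑ z, (if x ∈ G.neighborFinset y ∧ z ∈ (G.neighborFinset y).erase x then 1 else 0)
      = if x ∈ G.neighborFinset y then G.degree y - 1 else 0 := by
    intro x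
    split_ifs with hx
    · simp only [hx, true_and, sum_ite_mem, univ_inter, sum_const, smul_eq_mul, mul_one,
        card_erase_of_mem hx, card_neighborFinset_eq_degree]
    · simp [hx]
  simp only [h, hx, sum_ite_mem, univ_inter, sum_const, smul_eq_mul, card_neighborFinset_eq_degree]
  rw [Nat.mul_sub_one, sq, Nat.sub_add_cancel (Nat.le_mul_self _)]

end

variable (col : Sym2 V → ι) [DecidableEq ι]

theorem edgeFinset_edgeColorClass (i : ι) :
    (G.edgeColorClass col i).edgeFinset = {e ∈ G.edgeFinset | col e = i} := by
  ext e
  induction e using Sym2.ind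
  simp

variable [Fintype ι]

theorem sum_card_edgeFinset_edgeColorClass :
    ∑ i, #(G.edgeColorClass col i).edgeFinset = #G.edgeFinset := by
  simp only [edgeFinset_edgeColorClass]
  exact (card_eq_sum_card_fiberwise fun _ _ => mem_univ _).symm

theorem card_filter_orderedTriangles_monochromatic :
    #{t ∈ G.orderedTriangles | col s(t.1, t.2.1) = col s(t.2.1, t.2.2) ∧
      col s(t.2.1, t.2.2) = col s(t.2.2, t.1)} =
    ∑ i, #(G.edgeColorClass col i).orderedTriangles := by
  rw [card_eq_sum_card_fiberwise (f := fun t => col s(t.1, t.2.1)) fun _ _ => mem_univ _]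
  refine sum_congr rfl fun i _ => congrArg card (ext fun t => ?_)
  simp only [orderedTriangles, mem_filter, mem_univ, true_and, edgeColorClass_adj, Sym2.eq_swap]
  grind

-- A non-rainbow triangle has two equally coloured edges at one of its corners, a monochromatic one
-- at all three; rotating the triangles makes the three corner counts equal.
variable {G col} in
theorem card_orderedTriangles_add_two_mul_le (h : ¬ ∃ x y z : V, G.Adj x y ∧ G.Adj y z ∧
      G.Adj x z ∧ col s(x, y) ≠ col s(y, z) ∧ col s(y, z) ≠ col s(x, z) ∧ col s(x, y) ≠ col s(x, z)) :
    #G.orderedTriangles + 2 * ∑ i, #(G.edgeColorClass col i).orderedTriangles ≤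
      3 * #{t ∈ G.orderedTriangles | col s(t.1, t.2.1) = col s(t.2.1, t.2.2)} := by
  push Not at h
  let same (t : V × V × V) : ℕ := if col s(t.1, t.2.1) = col s(t.2.1, t.2.2) then 1 else 0
  have hrot := G.sum_orderedTriangles_rotate same
  have hrot₂ := G.sum_orderedTriangles_rotate fun t => same (t.2.1, t.2.2, t.1)
  rw [← card_filter_orderedTriangles_monochromatic, card_filter, card_filter, card_eq_sum_ones,
    mul_sum, ← sum_add_distrib]
  calc _ ≤ ∑ t ∈ G.orderedTriangles,
        (same t + same (t.2.1, t.2.2, t.1) + same (t.2.2, t.1, t.2.1)) := by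
        refine sum_le_sum fun ⟨x, y, z⟩ ht => ?_
        simp only [orderedTriangles, mem_filter, mem_univ, true_and] at ht
        have hcorner := h x y z ht.1 ht.2.1 ht.2.2
        have hzx : s(z, x) = s(x, z) := Sym2.eq_swap
        simp only [same]
        split_ifs <;> grind
    _ = 3 * ∑ t ∈ G.orderedTriangles, same t := by
        rw [sum_add_distrib, sum_add_distrib, hrot₂, hrot]
        ring

variable [DecidableEq V]

theorem card_filter_orderedTriangles_le_sum_card_orderedCherries :
    #{t ∈ G.orderedTriangles | col s(t.1, t.2.1) = col s(t.2.1, t.2.2)} ≤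
    ∑ i, #(G.edgeColorClass col i).orderedCherries := by
  rw [card_eq_sum_card_fiberwise (f := fun t => col s(t.1, t.2.1)) fun _ _ => mem_univ _]
  refine sum_le_sum fun i _ => card_le_card fun t ht => ?_
  simp only [orderedTriangles, orderedCherries, mem_filter, mem_univ, true_and,
    edgeColorClass_adj] at ht ⊢
  obtain ⟨⟨⟨hxy, hyz, hxz⟩, hsame⟩, rfl⟩ := ht
  exact ⟨⟨hxy, rfl⟩, ⟨hyz, hsame.symm⟩, G.ne_of_adj hxz⟩

variable {G col} in
theorem two_mul_card_orderedTriangles_add_le (h : ¬ ∃ x y z : V, G.Adj x y ∧ G.Adj y z ∧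
      G.Adj x z ∧ col s(x, y) ≠ col s(y, z) ∧ col s(y, z) ≠ col s(x, z) ∧ col s(x, y) ≠ col s(x, z)) :
    2 * #G.orderedTriangles + 12 * #G.edgeFinset ≤ 6 * ∑ i, #(G.edgeColorClass col i).edgeFinset *
      min (#(G.edgeColorClass col i).edgeFinset + 1) (Fintype.card V) := by
  have hcherries :
      2 * ∑ i, #(G.edgeColorClass col i).orderedCherries + 4 * #G.edgeFinset ≤
      2 * ∑ i, #(G.edgeColorClass col i).edgeFinset *
        min (#(G.edgeColorClass col i).edgeFinset + 1) (Fintype.card V) +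
      ∑ i, #(G.edgeColorClass col i).orderedTriangles := by
    rw [← sum_card_edgeFinset_edgeColorClass G col]
    simp only [mul_sum, ← sum_add_distrib]
    refine sum_le_sum fun i _ => ?_
    have hpaths := (G.edgeColorClass col i).card_orderedCherries_add_two_mul_card_edgeFinset
    have hdegree := (G.edgeColorClass col i).two_mul_sum_degree_sq_le_min
    linarith
  have hcorners := card_orderedTriangles_add_two_mul_le h
  have hclasses := G.card_filter_orderedTriangles_le_sum_card_orderedCherries col
  omega

end SimpleGraph

theorem five_mul_mul_min_add_sq_le {n k : ℕ} (hk : 2 * n ≤ 5 * k) :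
    5 * (k * min (k + 1) n) + 2 * n ^ 2 ≤ (7 * n + 5) * k := by
  rcases le_total (k + 1) n with h | h
  · rw [min_eq_left h]
    nlinarith
  · rw [min_eq_right h]
    nlinarith

open SimpleGraph in
/-- An edge-coloured graph on `n ≥ 1` vertices with at least `n`
colour classes, each of size at least `2n/5`, contains a rainbow triangle. -/
theorem stmt3 {V : Type*} [Fintype V] [DecidableEq V] [Nonempty V]
    (G : SimpleGraph V) [DecidableRel G.Adj] (n : ℕ) (hn : n = Fintype.card V)
    {ι : Type*} [Fintype ι] [DecidableEq ι] (col : Sym2 V → ι)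
    (hnum : n ≤ Fintype.card ι)
    (hsize : ∀ i : ι, 2 * n ≤ 5 * (G.edgeFinset.filter (fun e => col e = i)).card) :
    ∃ x y z : V, G.Adj x y ∧ G.Adj y z ∧ G.Adj x z ∧
      col s(x, y) ≠ col s(y, z) ∧ col s(y, z) ≠ col s(x, z) ∧ col s(x, y) ≠ col s(x, z) := by
  by_contra h
  have hsize' (i : ι) : 2 * n ≤ 5 * #(G.edgeColorClass col i).edgeFinset := by
    simpa only [edgeFinset_edgeColorClass] using hsize i
  have hupper := two_mul_card_orderedTriangles_add_le h
  have hlower := G.two_mul_sum_degree_sq_le fun u v _ =>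
    G.degree_add_degree_le_card_add_card_inter u v
  have hcauchy := G.four_mul_sq_card_edgeFinset_le
  rw [← hn] at hupper hlower hcauchy
  set m := Fintype.card ι
  set e := #G.edgeFinset
  have hclasses : 5 * ∑ i, #(G.edgeColorClass col i).edgeFinset *
      min (#(G.edgeColorClass col i).edgeFinset + 1) n + 2 * n ^ 2 * m ≤ (7 * n + 5) * e := by
    have := sum_le_sum fun i (_ : i ∈ univ) => five_mul_mul_min_add_sq_le (hsize' i)
    rwa [sum_add_distrib, sum_const, card_univ, smul_eq_mul, ← mul_sum, ← mul_sum,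
      sum_card_edgeFinset_edgeColorClass, mul_comm m] at this
  have hedges : 2 * n * m ≤ 5 * e := by
    have := sum_le_sum fun i (_ : i ∈ univ) => hsize' i
    rwa [sum_const, card_univ, smul_eq_mul, ← mul_sum, sum_card_edgeFinset_edgeColorClass,
      mul_comm] at this
  have hpos : 1 ≤ n := hn ▸ Fintype.card_pos
  have he₅ : 2 * n ^ 2 ≤ 5 * e := by nlinarith
  have he₈ : 3 * n ^ 2 ≤ 8 * e := by nlinarith
  nlinarith [Nat.mul_le_mul_left n hlower, Nat.mul_le_mul_left n hupper,
    Nat.mul_le_mul_left n hclasses, Nat.mul_le_mul_left (n ^ 3) hnum]
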